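/- Let V be a finite set, k an integer, μ = ⌈(k−3)/2⌉, U ⊆ V, I and H multigraphs on V, and G = (V, E) a multigraph with x : E → ℝ, x_e ≥ 0 for all e. For disjoint S, T ⊆ V let ψ(S,T) = d_I(S,T) + 2·d_H(S,T) + x(δ_E(S,T)) and ψ(S) = ψ(S, V\S). Assume: (1) ψ(S) ≥ k − 2 for every cut S with S = {w} or V\S = {w} for some w ∈ U, and ψ(S) ≥ k for every other cut S; (2) d_H(w) ≤ 1 and d_I(w) + 2·d_H(w) ≥ k − 2 for every w ∈ U; (3) A and B are crossing cuts with ψ(A) = ψ(B) = k, A∩B = {u} and A\B = {v}, where u, v ∈ U; (4) d_H(u,v) = 1 and d_I(u,v) ≥ μ; (5) d_I(B) + 2·d_H(B) ≤ k − 1. Then there exists w ∈ U such that either ((V\A)∩B = {w}, d_H(u,w) = 0, and 2·d_I(u,w) ≥ k − 3), or ((V\A)\B = {w}, d_H(v,w) = 0, and 2·d_I(v,w) ≥ k − 3). -/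

import Mathlib

open Finset

variable {V : Type*} [Fintype V] [DecidableEq V]

/-- `d_m(S,T)`: total multiplicity of edges of the multigraph `m` with one end in `S` and
the other in `T` (for disjoint `S`, `T`). -/
def dBetween (m : V → V → ℕ) (S T : Finset V) : ℕ := ∑ u ∈ S, ∑ v ∈ T, m u v

/-- `d_m(S) = d_m(S, V \ S)`. -/
def degS (m : V → V → ℕ) (S : Finset V) : ℕ := dBetween m S Sᶜ

variable {E : Type*} [Fintype E] [DecidableEq E]

/-- Edges of the edge-indexed multigraph `(V, E)` (endpoint map `ends`) with one endpoint
in `S` and the other in `T` (for disjoint `S`, `T`). -/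
def betweenEdges (ends : E → V × V) (S T : Finset V) : Finset E :=
  univ.filter fun e => ((ends e).1 ∈ S ∧ (ends e).2 ∈ T) ∨ ((ends e).1 ∈ T ∧ (ends e).2 ∈ S)

/-- `ψ(S,T) = d_I(S,T) + 2 d_H(S,T) + x(δ_E(S,T))`. -/
def psi (I H : V → V → ℕ) (ends : E → V × V) (x : E → ℝ) (S T : Finset V) : ℝ :=
  (dBetween I S T : ℝ) + 2 * (dBetween H S T : ℝ) + ∑ e ∈ betweenEdges ends S T, x e

/-- `ψ(S) = ψ(S, V \ S)`. -/
def psiS (I H : V → V → ℕ) (ends : E → V × V) (x : E → ℝ) (S : Finset V) : ℝ :=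
  psi I H ends x S Sᶜ

/-! Write `C = B \ A` and `D = V \ (A ∪ B)`. As `C`, `D` partition `V \ A` while `A ∩ B = {u}`
and `A \ B = {v}` lie on opposite sides of `B`, we get `ψ(C) + ψ(D) + 2ψ(u,v) ≤ ψ(A) + 2ψ(B) = 3k`,
and `2ψ(u,v) ≥ 2(μ + 2) ≥ k + 1`. So `ψ(C) < k` or `ψ(D) < k`, and the cut condition makes that
set a singleton `{w}` with `w ∈ U`. Then `B = {u, w}` or `V \ B = {v, w}`; adding the degree
bounds at the two ends of this pair and comparing with the bound on `d_I(B) + 2 d_H(B)` gives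
`2 d_I(·, w) ≥ k - 3`, and `d_H(·, w) = 0` because the only `H`-edge at `u` (resp. `v`) goes to `v`
(resp. `u`). -/

section Degree

variable {m : V → V → ℕ}

omit [Fintype V] in
lemma dBetween_union_left {S₁ S₂ : Finset V} (h : Disjoint S₁ S₂) (T : Finset V) :
    dBetween m (S₁ ∪ S₂) T = dBetween m S₁ T + dBetween m S₂ T :=
  sum_union h

omit [Fintype V] [DecidableEq V] in
lemma dBetween_comm (hm : ∀ a b, m a b = m b a) (S T : Finset V) :
    dBetween m S T = dBetween m T S := by
  rw [dBetween, dBetween, sum_comm]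
  simp only [hm]

lemma degS_compl (hm : ∀ a b, m a b = m b a) (S : Finset V) : degS m Sᶜ = degS m S := by
  rw [degS, degS, compl_compl, dBetween_comm hm]

lemma degS_singleton (p : V) : degS m {p} = ∑ b ∈ {p}ᶜ, m p b := by
  simp [degS, dBetween]

lemma degS_add_degS (hm : ∀ a b, m a b = m b a) {p q : V} (hpq : p ≠ q) :
    degS m {p} + degS m {q} = degS m {p, q} + 2 * m p q := by
  have hp : ({p} : Finset V)ᶜ = insert q ({p, q} : Finset V)ᶜ := by
    ext a; by_cases a = q <;> simp_all [eq_comm]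
  have hq : ({q} : Finset V)ᶜ = insert p ({p, q} : Finset V)ᶜ := by
    ext a; by_cases a = p <;> simp_all
  rw [degS_singleton, degS_singleton, hp, hq, sum_insert (by simp), sum_insert (by simp),
    degS, dBetween, sum_pair hpq, hm q p]
  ring

lemma eq_zero_of_degS_le_one {p q r : V} (hdeg : degS m {p} ≤ 1) (hq : m p q = 1)
    (hqp : q ≠ p) (hrp : r ≠ p) (hqr : q ≠ r) : m p r = 0 := by
  have hsub : ({q, r} : Finset V) ⊆ {p}ᶜ := by simp [hqp.symm, hrp.symm]
  have := sum_le_sum_of_subset (f := m p) hsub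
  rw [sum_pair hqr, ← degS_singleton] at this
  omega

end Degree

section Cut

variable {I H : V → V → ℕ} {ends : E → V × V} {x : E → ℝ}

omit [Fintype V] in
lemma betweenEdges_union_left (ends : E → V × V) (S₁ S₂ T : Finset V) :
    betweenEdges ends (S₁ ∪ S₂) T = betweenEdges ends S₁ T ∪ betweenEdges ends S₂ T := by
  ext e
  simp only [betweenEdges, mem_filter, mem_union, mem_univ, true_and]
  tauto

omit [Fintype V] [DecidableEq E] in
lemma betweenEdges_comm (ends : E → V × V) (S T : Finset V) :
    betweenEdges ends S T = betweenEdges ends T S := by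
  ext e
  simp only [betweenEdges, mem_filter]
  tauto

omit [Fintype V] [DecidableEq E] in
lemma disjoint_betweenEdges {S₁ S₂ T : Finset V} (h12 : Disjoint S₁ S₂) (h2 : Disjoint S₂ T) :
    Disjoint (betweenEdges ends S₁ T) (betweenEdges ends S₂ T) := by
  rw [disjoint_left] at *
  simp only [betweenEdges, mem_filter, mem_univ, true_and]
  grind

omit [Fintype V] [DecidableEq E] in
lemma psi_nonneg (hx : ∀ e, 0 ≤ x e) (S T : Finset V) : 0 ≤ psi I H ends x S T := by
  unfold psi
  have := sum_nonneg fun e (_ : e ∈ betweenEdges ends S T) => hx e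
  positivity

omit [Fintype V] [DecidableEq E] in
lemma psi_singleton_singleton_ge (hx : ∀ e, 0 ≤ x e) (p q : V) :
    (I p q : ℝ) + 2 * H p q ≤ psi I H ends x {p} {q} := by
  have := sum_nonneg fun e (_ : e ∈ betweenEdges ends {p} {q}) => hx e
  simp only [psi, dBetween, sum_singleton]
  linarith

omit [Fintype V] [DecidableEq E] in
lemma psi_comm (hI : ∀ a b, I a b = I b a) (hH : ∀ a b, H a b = H b a) (S T : Finset V) :
    psi I H ends x S T = psi I H ends x T S := by
  rw [psi, psi, dBetween_comm hI, dBetween_comm hH, betweenEdges_comm]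

omit [Fintype V] in
lemma psi_union_left {S₁ S₂ T : Finset V} (h12 : Disjoint S₁ S₂) (h2 : Disjoint S₂ T) :
    psi I H ends x (S₁ ∪ S₂) T = psi I H ends x S₁ T + psi I H ends x S₂ T := by
  simp only [psi, dBetween_union_left h12, betweenEdges_union_left,
    sum_union (disjoint_betweenEdges h12 h2)]
  push_cast
  ring

omit [Fintype V] in
lemma psi_union_right (hI : ∀ a b, I a b = I b a) (hH : ∀ a b, H a b = H b a)
    {S T₁ T₂ : Finset V} (h12 : Disjoint T₁ T₂) (h2 : Disjoint T₂ S) :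
    psi I H ends x S (T₁ ∪ T₂) = psi I H ends x S T₁ + psi I H ends x S T₂ := by
  rw [psi_comm hI hH, psi_union_left h12 h2, psi_comm hI hH T₁, psi_comm hI hH T₂]

omit [DecidableEq E] in
lemma psiS_compl (hI : ∀ a b, I a b = I b a) (hH : ∀ a b, H a b = H b a) (S : Finset V) :
    psiS I H ends x Sᶜ = psiS I H ends x S := by
  rw [psiS, psiS, compl_compl, psi_comm hI hH]

lemma psiS_add_psiS (hI : ∀ a b, I a b = I b a) (hH : ∀ a b, H a b = H b a)
    {X Y : Finset V} (hXY : Disjoint X Y) :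
    psiS I H ends x X + psiS I H ends x Y =
      psiS I H ends x (X ∪ Y) + 2 * psi I H ends x X Y := by
  have hZX : Disjoint (X ∪ Y)ᶜ X := disjoint_compl_left.mono_right subset_union_left
  have hZY : Disjoint (X ∪ Y)ᶜ Y := disjoint_compl_left.mono_right subset_union_right
  have hX : Xᶜ = Y ∪ (X ∪ Y)ᶜ := by ext; simp; grind [disjoint_left]
  have hY : Yᶜ = X ∪ (X ∪ Y)ᶜ := by ext; simp; grind [disjoint_left]
  rw [psiS, psiS, psiS, hX, hY, psi_union_right hI hH hZY.symm hZX,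
    psi_union_right hI hH hZX.symm hZY, psi_union_left hXY hZY.symm, psi_comm hI hH Y X]
  ring

omit [Fintype V] in
lemma psi_add_psi_le_psi_union (hx : ∀ e, 0 ≤ x e)
    (hI : ∀ a b, I a b = I b a) (hH : ∀ a b, H a b = H b a) {P Q R S : Finset V}
    (hPR : Disjoint P R) (hQS : Disjoint Q S) (h : Disjoint (P ∪ R) (Q ∪ S)) :
    psi I H ends x P Q + psi I H ends x R S ≤ psi I H ends x (P ∪ R) (Q ∪ S) := by
  obtain ⟨hP, hR⟩ := disjoint_union_left.mp h
  rw [psi_union_left hPR hR, psi_union_right hI hH hQS (disjoint_union_right.mp hP).2.symm,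
    psi_union_right hI hH hQS (disjoint_union_right.mp hR).2.symm]
  linarith [psi_nonneg (I := I) (H := H) (ends := ends) hx P S,
    psi_nonneg (I := I) (H := H) (ends := ends) hx R Q]

lemma psiS_sdiff_add_psiS_compl_union_le (hx : ∀ e, 0 ≤ x e)
    (hI : ∀ a b, I a b = I b a) (hH : ∀ a b, H a b = H b a) (A B : Finset V) :
    psiS I H ends x (B \ A) + psiS I H ends x (A ∪ B)ᶜ + 2 * psi I H ends x (A ∩ B) (A \ B) ≤
      psiS I H ends x A + 2 * psiS I H ends x B := by
  have hCD : Disjoint (B \ A) (A ∪ B)ᶜ := by simp [disjoint_left]; tauto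
  have hAc : B \ A ∪ (A ∪ B)ᶜ = Aᶜ := by ext; simp; tauto
  have hB : A ∩ B ∪ B \ A = B := by ext; simp; tauto
  have hBc : A \ B ∪ (A ∪ B)ᶜ = Bᶜ := by ext; simp; tauto
  have hsplit := psiS_add_psiS (ends := ends) (x := x) hI hH hCD
  have hle := psi_add_psi_le_psi_union (ends := ends) hx hI hH
    (P := A ∩ B) (Q := A \ B) (R := B \ A) (S := (A ∪ B)ᶜ)
    (by simp [disjoint_left]; tauto) (by simp [disjoint_left]; tauto)
    (by rw [hB, hBc]; exact disjoint_compl_right)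
  rw [hAc, psiS_compl hI hH A] at hsplit
  rw [hB, hBc, ← psiS] at hle
  linarith

end Cut
section AlternativeNode

variable {I H : V → V → ℕ} {ends : E → V × V} {x : E → ℝ}

omit [Fintype V] [DecidableEq E] in
lemma add_one_le_two_mul_psi_singleton (hx : ∀ e, 0 ≤ x e) {k μ : ℤ}
    (hμ : μ = ⌈((k : ℚ) - 3) / 2⌉) {p q : V} (hHpq : H p q = 1) (hIpq : μ ≤ (I p q : ℤ)) :
    (k : ℝ) + 1 ≤ 2 * psi I H ends x {p} {q} := by
  have hkμ : (k : ℝ) - 3 ≤ 2 * μ := by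
    have := Int.le_ceil (((k : ℚ) - 3) / 2)
    rw [← hμ] at this
    exact_mod_cast (by linarith : (k : ℚ) - 3 ≤ 2 * μ)
  have hIpq' : (μ : ℝ) ≤ I p q := by exact_mod_cast hIpq
  have := psi_singleton_singleton_ge (I := I) (H := H) (ends := ends) hx p q
  rw [hHpq, Nat.cast_one] at this
  linarith

omit [DecidableEq E] in
lemma exists_eq_singleton_of_psiS_lt {k : ℝ} {U : Finset V}
    (hlarge : ∀ S : Finset V, S.Nonempty → S ≠ univ →
      ¬ (∃ w ∈ U, S = {w} ∨ Sᶜ = {w}) → k ≤ psiS I H ends x S)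
    {S : Finset V} (hS : S.Nonempty) {p q : V} (hp : p ∉ S) (hq : q ∉ S) (hpq : p ≠ q)
    (hlt : psiS I H ends x S < k) : ∃ w ∈ U, S = {w} := by
  by_contra hne
  refine (hlarge S hS (fun h => hp (h ▸ mem_univ p)) ?_).not_gt hlt
  rintro ⟨w, hw, hSw | hSw⟩
  · exact hne ⟨w, hw, hSw⟩
  · have hpw : p ∈ Sᶜ := mem_compl.mpr hp
    have hqw : q ∈ Sᶜ := mem_compl.mpr hq
    rw [hSw, mem_singleton] at hpw hqw
    exact hpq (hpw.trans hqw.symm)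

lemma ghost_edge_of_degS_pair_le (hI : ∀ a b, I a b = I b a) (hH : ∀ a b, H a b = H b a)
    {k : ℤ} {p q w : V} (hp1 : degS H {p} ≤ 1)
    (hp2 : k - 2 ≤ (degS I {p} : ℤ) + 2 * (degS H {p} : ℤ))
    (hw2 : k - 2 ≤ (degS I {w} : ℤ) + 2 * (degS H {w} : ℤ))
    (hqp : q ≠ p) (hwp : w ≠ p) (hqw : q ≠ w) (hHpq : H p q = 1)
    (hpair : (degS I {p, w} : ℤ) + 2 * (degS H {p, w} : ℤ) ≤ k - 1) :
    H p w = 0 ∧ k - 3 ≤ 2 * (I p w : ℤ) := by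
  have hHpw := eq_zero_of_degS_le_one hp1 hHpq hqp hwp hqw
  have hI2 := degS_add_degS hI hwp.symm
  have hH2 := degS_add_degS hH hwp.symm
  exact ⟨hHpw, by omega⟩

end AlternativeNode

theorem alternative_ghost_edge_node_general
    (k : ℤ) (μ : ℤ) (hμ : μ = ⌈((k : ℚ) - 3) / 2⌉)
    (U : Finset V) (I H : V → V → ℕ)
    (hIsymm : ∀ a b, I a b = I b a) (hHsymm : ∀ a b, H a b = H b a)
    (ends : E → V × V) (x : E → ℝ) (hx : ∀ e, 0 ≤ x e)
    (hpsi2 : ∀ S : Finset V, S.Nonempty → S ≠ univ →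
      ¬ (∃ w ∈ U, S = {w} ∨ Sᶜ = {w}) → (k : ℝ) ≤ psiS I H ends x S)
    (hU1 : ∀ w ∈ U, degS H {w} ≤ 1)
    (hU2 : ∀ w ∈ U, k - 2 ≤ (degS I {w} : ℤ) + 2 * (degS H {w} : ℤ))
    (u v : V) (hu : u ∈ U) (hv : v ∈ U)
    (A B : Finset V)
    (hcross : (A ∩ B).Nonempty ∧ (A \ B).Nonempty ∧ (B \ A).Nonempty ∧ ((A ∪ B)ᶜ).Nonempty)
    (hpsiA : psiS I H ends x A = (k : ℝ)) (hpsiB : psiS I H ends x B = (k : ℝ))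
    (hAB : A ∩ B = {u}) (hAdB : A \ B = {v})
    (hHuv : H u v = 1) (hIuv : μ ≤ (I u v : ℤ))
    (hfB : (degS I B : ℤ) + 2 * (degS H B : ℤ) ≤ k - 1) :
    ∃ w ∈ U,
      (Aᶜ ∩ B = {w} ∧ H u w = 0 ∧ k - 3 ≤ 2 * (I u w : ℤ)) ∨
      (Aᶜ \ B = {w} ∧ H v w = 0 ∧ k - 3 ≤ 2 * (I v w : ℤ)) := by
  obtain ⟨-, -, hC, hD⟩ := hcross
  obtain ⟨huA, huB⟩ := mem_inter.mp (hAB ▸ mem_singleton_self u)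
  obtain ⟨hvA, hvB⟩ := mem_sdiff.mp (hAdB ▸ mem_singleton_self v)
  have huv : u ≠ v := fun h => hvB (h ▸ huB)
  have hψuv := add_one_le_two_mul_psi_singleton (ends := ends) hx hμ hHuv hIuv
  have hcut := psiS_sdiff_add_psiS_compl_union_le (ends := ends) hx hIsymm hHsymm A B
  rw [hAB, hAdB, hpsiA, hpsiB] at hcut
  obtain hCk | hDk : psiS I H ends x (B \ A) < k ∨ psiS I H ends x (A ∪ B)ᶜ < k := by
    by_contra! h
    linarith [h.1, h.2]
  · obtain ⟨w, hw, hCw⟩ :=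
      exists_eq_singleton_of_psiS_lt hpsi2 hC (by simp [huA]) (by simp [hvA]) huv hCk
    obtain ⟨hwB, hwA⟩ := mem_sdiff.mp (hCw ▸ mem_singleton_self w)
    have hBuw : B = {u, w} := by
      rw [← sdiff_union_inter B A, hCw, inter_comm, hAB, union_comm, insert_eq]
    refine ⟨w, hw, Or.inl ⟨by rw [← hCw, inter_comm, sdiff_eq_inter_compl], ?_⟩⟩
    exact ghost_edge_of_degS_pair_le hIsymm hHsymm (hU1 u hu) (hU2 u hu) (hU2 w hw)
      huv.symm (fun h => hwA (h ▸ huA)) (fun h => hvB (h ▸ hwB)) hHuv (hBuw ▸ hfB)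
  · obtain ⟨w, hw, hDw⟩ :=
      exists_eq_singleton_of_psiS_lt hpsi2 hD (by simp [huA]) (by simp [hvA]) huv hDk
    have hwAB : w ∈ (A ∪ B)ᶜ := hDw ▸ mem_singleton_self w
    obtain ⟨hwA, -⟩ : w ∉ A ∧ w ∉ B := by simpa using hwAB
    have hBvw : Bᶜ = {v, w} := by
      rw [insert_eq, ← hAdB, ← hDw]
      ext; simp; tauto
    refine ⟨w, hw, Or.inr ⟨by rw [← hDw, compl_union, sdiff_eq_inter_compl], ?_⟩⟩
    refine ghost_edge_of_degS_pair_le hIsymm hHsymm (hU1 v hv) (hU2 v hv) (hU2 w hw)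
      huv (fun h => hwA (h ▸ hvA)) (fun h => hwA (h ▸ huA)) (hHsymm v u ▸ hHuv) ?_
    rwa [← hBvw, degS_compl hIsymm, degS_compl hHsymm]

/-- Lemma 4.5: if `d_H(u,v) = 1` then there is an "alternative" node `w ∈ U` in
`(V \ A) ∩ B` or in `(V \ A) \ B` such that a ghost edge `uw` or `vw` can be added. -/
theorem alternative_ghost_edge_node
    (k : ℤ) (μ : ℤ) (hμ : μ = ⌈((k : ℚ) - 3) / 2⌉)
    (U : Finset V) (I H : V → V → ℕ)
    (hIsymm : ∀ a b, I a b = I b a) (hHsymm : ∀ a b, H a b = H b a)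
    (ends : E → V × V) (x : E → ℝ) (hx : ∀ e, 0 ≤ x e)
    (hpsi1 : ∀ S : Finset V, S.Nonempty → S ≠ univ →
      (∃ w ∈ U, S = {w} ∨ Sᶜ = {w}) → (k : ℝ) - 2 ≤ psiS I H ends x S)
    (hpsi2 : ∀ S : Finset V, S.Nonempty → S ≠ univ →
      ¬ (∃ w ∈ U, S = {w} ∨ Sᶜ = {w}) → (k : ℝ) ≤ psiS I H ends x S)
    (hU1 : ∀ w ∈ U, degS H {w} ≤ 1)
    (hU2 : ∀ w ∈ U, k - 2 ≤ (degS I {w} : ℤ) + 2 * (degS H {w} : ℤ))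
    (u v : V) (hu : u ∈ U) (hv : v ∈ U)
    (A B : Finset V)
    (hcross : (A ∩ B).Nonempty ∧ (A \ B).Nonempty ∧ (B \ A).Nonempty ∧ ((A ∪ B)ᶜ).Nonempty)
    (hpsiA : psiS I H ends x A = (k : ℝ)) (hpsiB : psiS I H ends x B = (k : ℝ))
    (hAB : A ∩ B = {u}) (hAdB : A \ B = {v})
    (hHuv : H u v = 1) (hIuv : μ ≤ (I u v : ℤ))
    (hfB : (degS I B : ℤ) + 2 * (degS H B : ℤ) ≤ k - 1) :
    ∃ w ∈ U,
      (Aᶜ ∩ B = {w} ∧ H u w = 0 ∧ k - 3 ≤ 2 * (I u w : ℤ)) ∨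
      (Aᶜ \ B = {w} ∧ H v w = 0 ∧ k - 3 ≤ 2 * (I v w : ℤ)) :=
  alternative_ghost_edge_node_general k μ hμ U I H hIsymm hHsymm ends x hx hpsi2 hU1 hU2 u v hu hv A
    B hcross hpsiA hpsiB hAB hAdB hHuv hIuv hfB
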